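/- Let $W \ge 0$ be a random variable with $\mathbb{E}[W] = 1$ and let $c \in \mathbb{R}$ be a constant. Then $\mathbb{E}[c - W c] = 0$. More substantively, in the doubly-robust estimator with correctly specified density ratio: suppose $W_t = \omega(\tilde S_t)\rho_t$ satisfies $\mathbb{E}[W_t] = 1$, $\mathbb{E}[W_t R_t] = V(\pi)$ (the importance-sampling identity), and $\mathbb{E}[W_t\, Q(\pi(S_{t+1}), \tilde S_{t+1})] = \mathbb{E}[W_t\, Q(A_t, \tilde S_t)]$ (shift-invariance under the stationary target distribution). Then for any constant $\tilde V \in \mathbb{R}$ and the given $Q$, $\mathbb{E}\big[\tilde V + W_t(R_t + Q(\pi(S_{t+1}),\tilde S_{t+1}) - Q(A_t,\tilde S_t) - \tilde V)\big] = V(\pi)$. -/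

import Mathlib

open MeasureTheory

/-- The plug-in constant cancels because `E[c - W c] = 0`. -/
theorem integral_const_add_mul_sub_const {Ω : Type*} [MeasurableSpace Ω] {μ : Measure Ω}
    [IsProbabilityMeasure μ] {W f : Ω → ℝ} (c : ℝ) (hW : Integrable W μ)
    (hWf : Integrable (fun x => W x * f x) μ) (hW1 : ∫ x, W x ∂μ = 1) :
    ∫ x, (c + W x * (f x - c)) ∂μ = ∫ x, W x * f x ∂μ := by
  have hexpand : (fun x => c + W x * (f x - c)) = fun x => c + (W x * f x - c * W x) := by
    funext x; ring
  have hdiff : Integrable (fun x => W x * f x - c * W x) μ := hWf.sub (hW.const_mul c)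
  rw [hexpand, integral_add (integrable_const c) hdiff,
    integral_sub hWf (hW.const_mul c), integral_const_mul, hW1]
  simp

theorem integral_mul_add_sub {Ω : Type*} [MeasurableSpace Ω] {μ : Measure Ω}
    {W R Qn Qc : Ω → ℝ} (hWR : Integrable (fun x => W x * R x) μ)
    (hWQn : Integrable (fun x => W x * Qn x) μ) (hWQc : Integrable (fun x => W x * Qc x) μ) :
    ∫ x, W x * (R x + Qn x - Qc x) ∂μ
      = ∫ x, W x * R x ∂μ + ∫ x, W x * Qn x ∂μ - ∫ x, W x * Qc x ∂μ := by
  have hWRQn : Integrable (fun x => W x * R x + W x * Qn x) μ := hWR.add hWQn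
  simp only [mul_sub, mul_add]
  rw [integral_sub hWRQn hWQc, integral_add hWR hWQn]

theorem stmt4_general {Ω : Type*} [MeasurableSpace Ω] (μ : Measure Ω) [IsProbabilityMeasure μ]
    (W R Qn Qc : Ω → ℝ) (Vπ Vt : ℝ)
    (hWint : Integrable W μ)
    (hWR : Integrable (fun x => W x * R x) μ)
    (hWQn : Integrable (fun x => W x * Qn x) μ)
    (hWQc : Integrable (fun x => W x * Qc x) μ)
    (hW1 : ∫ x, W x ∂μ = 1)
    (hIS : ∫ x, W x * R x ∂μ = Vπ)
    (hshift : ∫ x, W x * Qn x ∂μ = ∫ x, W x * Qc x ∂μ) :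
    ∫ x, (Vt + W x * (R x + Qn x - Qc x - Vt)) ∂μ = Vπ := by
  have hWf : Integrable (fun x => W x * (R x + Qn x - Qc x)) μ := by
    refine ((hWR.add hWQn).sub hWQc).congr (.of_forall fun x => ?_)
    simp only [Pi.add_apply, Pi.sub_apply]
    ring
  rw [integral_const_add_mul_sub_const Vt hWint hWf hW1, integral_mul_add_sub hWR hWQn hWQc,
    hIS, hshift, add_sub_cancel_right]

/-- Doubly-robust direction (correct density ratio): if the importance weight
`W` has mean one, `E[W R] = V(π)`, and the weighted Q-increments satisfy the
shift-invariance identity `E[W Qnext] = E[W Qcur]`, then the doubly-robust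
estimator is unbiased for `V(π)` for any plug-in value `Vt`. -/
theorem stmt4 {Ω : Type*} [MeasurableSpace Ω] (μ : Measure Ω) [IsProbabilityMeasure μ]
    (W R Qn Qc : Ω → ℝ) (Vπ Vt : ℝ)
    (hW0 : ∀ᵐ x ∂μ, 0 ≤ W x)
    (hWint : Integrable W μ)
    (hWR : Integrable (fun x => W x * R x) μ)
    (hWQn : Integrable (fun x => W x * Qn x) μ)
    (hWQc : Integrable (fun x => W x * Qc x) μ)
    (hW1 : ∫ x, W x ∂μ = 1)
    (hIS : ∫ x, W x * R x ∂μ = Vπ)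
    (hshift : ∫ x, W x * Qn x ∂μ = ∫ x, W x * Qc x ∂μ) :
    ∫ x, (Vt + W x * (R x + Qn x - Qc x - Vt)) ∂μ = Vπ :=
  stmt4_general μ W R Qn Qc Vπ Vt hWint hWR hWQn hWQc hW1 hIS hshift
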